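/- Fix continuous f. The set of input-output functions computable by hierarchical PCGs (i.e., PCGs with subdiagonal-block weight matrices, evaluated at the global energy minimum during testing) equals the set of functions computable by feedforward networks with activation f; hence hierarchical PCGs compute exactly the FNN function class and in particular contain it. -/
import Mathlib


/-- Cumulative layer sizes. -/
def S (n : ℕ → ℕ) (m : ℕ) : ℕ := ∑ k ∈ Finset.range m, n k

/-- The layer of a global PCG node index α (blocks I_ℓ = [S ℓ, S (ℓ+1))). -/
def lay (L : ℕ) (n : ℕ → ℕ) (α : ℕ) : ℕ := Nat.findGreatest (fun ℓ => S n ℓ ≤ α) L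

/-- Assemble the PCG node vector from layered activations. -/
def asm (L : ℕ) (n : ℕ → ℕ) (a : ℕ → ℕ → ℝ) (α : ℕ) : ℝ :=
  a (lay L n α) (α - S n (lay L n α))

/-- The hierarchical PCG weight matrix built from layered weights: nonzero only on the
subdiagonal blocks, where block (ℓ, ℓ-1) equals w^{ℓ-1}. -/
def wt (L : ℕ) (n : ℕ → ℕ) (w : ℕ → ℕ → ℕ → ℝ) (α β : ℕ) : ℝ :=
  if lay L n β + 1 = lay L n α then
    w (lay L n β) (α - S n (lay L n α)) (β - S n (lay L n β)) else 0

/-- The hierarchical PCG energy as a function of the layered activations. -/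
def EG (L : ℕ) (n : ℕ → ℕ) (f : ℝ → ℝ) (w : ℕ → ℕ → ℕ → ℝ) (a : ℕ → ℕ → ℝ) : ℝ :=
  ∑ α ∈ Finset.range (S n (L + 1)),
    (asm L n a α - f (∑ β ∈ Finset.range (S n (L + 1)), wt L n w α β * asm L n a β)) ^ 2

/-- The feedforward (FNN) activations computed recursively from input `x`. -/
def ff (n : ℕ → ℕ) (w : ℕ → ℕ → ℕ → ℝ) (f : ℝ → ℝ) (x : ℕ → ℝ) : ℕ → ℕ → ℝ
  | 0 => x
  | ℓ + 1 => fun i => f (∑ j ∈ Finset.range (n ℓ), w ℓ i j * ff n w f x ℓ j)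

lemma S_succ (n : ℕ → ℕ) (m : ℕ) : S n (m+1) = S n m + n m := Finset.sum_range_succ _ _

lemma S_mono (n : ℕ → ℕ) : Monotone (S n) := fun _ _ h =>
  Finset.sum_le_sum_of_subset (Finset.range_subset_range.mpr h)

lemma lay_eq (L : ℕ) (n : ℕ → ℕ) {ℓ i : ℕ} (hℓ : ℓ ≤ L) (hi : i < n ℓ) :
    lay L n (S n ℓ + i) = ℓ := by
  rw [lay, Nat.findGreatest_eq_iff]
  refine ⟨hℓ, fun _ => Nat.le_add_right _ _, fun m hm _ hP => ?_⟩
  have h1 : S n (ℓ+1) ≤ S n m := S_mono n hm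
  rw [S_succ] at h1
  omega

lemma asm_eval (L : ℕ) (n : ℕ → ℕ) (a : ℕ → ℕ → ℝ) {ℓ i : ℕ} (hℓ : ℓ ≤ L) (hi : i < n ℓ) :
    asm L n a (S n ℓ + i) = a ℓ i := by
  rw [asm, lay_eq L n hℓ hi, Nat.add_sub_cancel_left]

lemma sum_range_add (g : ℕ → ℝ) (a b : ℕ) :
    ∑ α ∈ Finset.range (a+b), g α =
      ∑ α ∈ Finset.range a, g α + ∑ i ∈ Finset.range b, g (a+i) := by
  induction b with
  | zero => simp
  | succ b ih => rw [← Nat.add_assoc, Finset.sum_range_succ, ih, Finset.sum_range_succ, add_assoc]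

lemma sum_blocks (n : ℕ → ℕ) (g : ℕ → ℝ) (M : ℕ) :
    ∑ α ∈ Finset.range (S n M), g α =
      ∑ ℓ ∈ Finset.range M, ∑ i ∈ Finset.range (n ℓ), g (S n ℓ + i) := by
  induction M with
  | zero => simp [S]
  | succ M ih => rw [S_succ, sum_range_add, ih, Finset.sum_range_succ]

lemma innerSumEval (L : ℕ) (n : ℕ → ℕ) (w : ℕ → ℕ → ℕ → ℝ) (a : ℕ → ℕ → ℝ)
    {ℓ i : ℕ} (hℓ : ℓ ≤ L) (hi : i < n ℓ) :
    ∑ β ∈ Finset.range (S n (L+1)), wt L n w (S n ℓ + i) β * asm L n a β =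
      (match ℓ with
       | 0 => 0
       | m + 1 => ∑ j ∈ Finset.range (n m), w m i j * a m j) := by
  rw [sum_blocks]
  have key : ∀ m ∈ Finset.range (L+1), ∀ j ∈ Finset.range (n m),
      wt L n w (S n ℓ + i) (S n m + j) * asm L n a (S n m + j) =
        if m + 1 = ℓ then w m i j * a m j else 0 := by
    intro m hm j hj
    rw [Finset.mem_range] at hm
    rw [Finset.mem_range] at hj
    rw [wt, lay_eq L n (Nat.lt_succ_iff.mp hm) hj, lay_eq L n hℓ hi,
      asm_eval L n a (Nat.lt_succ_iff.mp hm) hj, Nat.add_sub_cancel_left,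
      Nat.add_sub_cancel_left]
    split <;> simp
  rw [Finset.sum_congr rfl (fun m hm => Finset.sum_congr rfl (key m hm))]
  match ℓ with
  | 0 => simp
  | m' + 1 =>
      have : ∀ m ∈ Finset.range (L+1),
          (∑ j ∈ Finset.range (n m), if m + 1 = m' + 1 then w m i j * a m j else 0) =
            if m = m' then ∑ j ∈ Finset.range (n m), w m i j * a m j else 0 := by
        intro m _
        by_cases h : m = m' <;> simp [h]
      rw [Finset.sum_congr rfl this, Finset.sum_ite_eq' (Finset.range (L+1))]
      have : m' ∈ Finset.range (L+1) := Finset.mem_range.mpr (by omega)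
      simp [this]

lemma EG_eq (L : ℕ) (n : ℕ → ℕ) (f : ℝ → ℝ) (w : ℕ → ℕ → ℕ → ℝ) (a : ℕ → ℕ → ℝ) :
    EG L n f w a =
      (∑ i ∈ Finset.range (n 0), (a 0 i - f 0) ^ 2) +
      ∑ ℓ ∈ Finset.range L, ∑ i ∈ Finset.range (n (ℓ+1)),
        (a (ℓ+1) i - f (∑ j ∈ Finset.range (n ℓ), w ℓ i j * a ℓ j)) ^ 2 := by
  rw [EG, sum_blocks, Finset.sum_range_succ']
  rw [add_comm]
  congr 1
  · refine Finset.sum_congr rfl fun i hi => ?_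
    rw [Finset.mem_range] at hi
    rw [asm_eval L n a (Nat.zero_le L) hi, innerSumEval L n w a (Nat.zero_le L) hi]
  · refine Finset.sum_congr rfl fun ℓ hℓ => Finset.sum_congr rfl fun i hi => ?_
    rw [Finset.mem_range] at hℓ
    rw [Finset.mem_range] at hi
    rw [asm_eval L n a hℓ hi, innerSumEval L n w a hℓ hi]

lemma EG_ff (L : ℕ) (n : ℕ → ℕ) (f : ℝ → ℝ) (w : ℕ → ℕ → ℕ → ℝ) (x : ℕ → ℝ) :
    EG L n f w (ff n w f x) = ∑ i ∈ Finset.range (n 0), (x i - f 0) ^ 2 := by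
  rw [EG_eq]
  have : ∀ ℓ ∈ Finset.range L, ∀ i ∈ Finset.range (n (ℓ+1)),
      (ff n w f x (ℓ+1) i - f (∑ j ∈ Finset.range (n ℓ), w ℓ i j * ff n w f x ℓ j)) ^ 2 = 0 := by
    intro ℓ _ i _
    simp [ff]
  rw [Finset.sum_congr rfl fun ℓ hℓ => Finset.sum_congr rfl (this ℓ hℓ)]
  simp [ff]

lemma min_eq_ff (L : ℕ) (n : ℕ → ℕ) (f : ℝ → ℝ) (w : ℕ → ℕ → ℕ → ℝ) (x : ℕ → ℝ)
    (a : ℕ → ℕ → ℝ) (h0 : ∀ i, a 0 i = x i)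
    (hmin : EG L n f w a ≤ EG L n f w (ff n w f x)) :
    ∀ ℓ ≤ L, ∀ i, a ℓ i = ff n w f x ℓ i ∨ ¬ i < n ℓ := by
  have hEGa := EG_eq L n f w a
  have hconst : (∑ i ∈ Finset.range (n 0), (a 0 i - f 0) ^ 2) =
      ∑ i ∈ Finset.range (n 0), (x i - f 0) ^ 2 :=
    Finset.sum_congr rfl fun i _ => by rw [h0]
  rw [EG_ff] at hmin
  rw [hEGa, hconst] at hmin
  have htail : (∑ ℓ ∈ Finset.range L, ∑ i ∈ Finset.range (n (ℓ+1)),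
      (a (ℓ+1) i - f (∑ j ∈ Finset.range (n ℓ), w ℓ i j * a ℓ j)) ^ 2) = 0 := by
    have hnn : (0:ℝ) ≤ ∑ ℓ ∈ Finset.range L, ∑ i ∈ Finset.range (n (ℓ+1)),
        (a (ℓ+1) i - f (∑ j ∈ Finset.range (n ℓ), w ℓ i j * a ℓ j)) ^ 2 :=
      Finset.sum_nonneg fun ℓ _ => Finset.sum_nonneg fun i _ => sq_nonneg _
    linarith
  have hzero : ∀ ℓ < L, ∀ i < n (ℓ+1),
      a (ℓ+1) i = f (∑ j ∈ Finset.range (n ℓ), w ℓ i j * a ℓ j) := by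
    intro ℓ hℓ i hi
    have h1 := (Finset.sum_eq_zero_iff_of_nonneg
      (fun ℓ _ => Finset.sum_nonneg fun i _ => sq_nonneg _)).mp htail ℓ (Finset.mem_range.mpr hℓ)
    have h2 := (Finset.sum_eq_zero_iff_of_nonneg
      (fun i _ => sq_nonneg _)).mp h1 i (Finset.mem_range.mpr hi)
    have h3 : a (ℓ+1) i - f (∑ j ∈ Finset.range (n ℓ), w ℓ i j * a ℓ j) = 0 := by
      exact pow_eq_zero_iff two_ne_zero |>.mp h2
    linarith
  intro ℓ
  induction ℓ with
  | zero => intro _ i; left; rw [h0 i]; rfl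
  | succ ℓ ih =>
    intro hℓ i
    by_cases hi : i < n (ℓ+1)
    · left
      rw [hzero ℓ (by omega) i hi]
      show _ = ff n w f x (ℓ+1) i
      simp only [ff]
      congr 1
      refine Finset.sum_congr rfl fun j hj => ?_
      rcases ih (by omega) j with h | h
      · rw [h]
      · exact absurd (Finset.mem_range.mp hj) h
    · right; exact hi

/-- for fixed continuous f and architecture, the class of input-output
functions computed by hierarchical PCGs at the global energy minimum during testing
equals the class of functions computed by FNNs with activation f. -/
theorem hierarchical_pcg_class_eq_fnn_class
    (L : ℕ) (n : ℕ → ℕ) (hn : ∀ ℓ ≤ L, 0 < n ℓ)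
    (f : ℝ → ℝ) (hf : Continuous f) :
    {F : (ℕ → ℝ) → ℕ → ℝ | ∃ w : ℕ → ℕ → ℕ → ℝ,
      ∀ (x : ℕ → ℝ) (i : ℕ), i < n L → F x i = ff n w f x L i} =
    {F : (ℕ → ℝ) → ℕ → ℝ | ∃ w : ℕ → ℕ → ℕ → ℝ,
      ∀ x : ℕ → ℝ, ∃ a : ℕ → ℕ → ℝ,
        (∀ i, a 0 i = x i) ∧
        (∀ b : ℕ → ℕ → ℝ, (∀ i, b 0 i = x i) → EG L n f w a ≤ EG L n f w b) ∧
        (∀ i < n L, F x i = a L i)} := by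
  ext F
  simp only [Set.mem_setOf_eq]
  constructor
  · rintro ⟨w, hw⟩
    refine ⟨w, fun x => ⟨ff n w f x, fun i => rfl, fun b hb => ?_, fun i hi => hw x i hi⟩⟩
    rw [EG_ff, EG_eq]
    have hc : (∑ i ∈ Finset.range (n 0), (x i - f 0) ^ 2) =
        ∑ i ∈ Finset.range (n 0), (b 0 i - f 0) ^ 2 :=
      Finset.sum_congr rfl fun i _ => by rw [hb]
    rw [hc]
    have : (0:ℝ) ≤ ∑ ℓ ∈ Finset.range L, ∑ i ∈ Finset.range (n (ℓ+1)),
        (b (ℓ+1) i - f (∑ j ∈ Finset.range (n ℓ), w ℓ i j * b ℓ j)) ^ 2 :=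
      Finset.sum_nonneg fun ℓ _ => Finset.sum_nonneg fun i _ => sq_nonneg _
    linarith
  · rintro ⟨w, hw⟩
    refine ⟨w, fun x i hi => ?_⟩
    obtain ⟨a, h0, hmin, hF⟩ := hw x
    rw [hF i hi]
    rcases min_eq_ff L n f w x a h0 (hmin (ff n w f x) fun i => rfl) L le_rfl i with h | h
    · exact h
    · exact absurd hi h
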